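/- Let ℰ denote the class of 2-Engel groups. Let F be the relatively free nilpotent group of class two of rank two, with free generators x and y, and let n > 1 be an integer. Let H be the subgroup of F generated by xⁿ and yⁿ. Then [x,y]ⁿ lies in dom_F^{ℰ}(H) but not in H; in particular the class of 2-Engel groups has instances of nontrivial dominions. -/

import Mathlib

universe u v

/-- The dominion of a subgroup `H` of `G` in the class of groups `P`. -/
def dominion {G : Type v} [Group G] (P : (K : Type u) → [Group K] → Prop)
    (H : Subgroup G) : Set G :=
  {a : G | ∀ (K : Type u) [Group K], P K → ∀ f g : G →* K,
    (∀ h ∈ H, f h = g h) → f a = g a}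

/-- The commutator `[a,b] = a⁻¹b⁻¹ab`. -/
def commElem {G : Type v} [Group G] (a b : G) : G := a⁻¹ * b⁻¹ * a * b

/-- The class `ℰ` of 2-Engel groups: groups satisfying `[[x,y],y] = e`. -/
def Engel2 (K : Type u) [Group K] : Prop :=
  ∀ x y : K, commElem (commElem x y) y = 1

/-- The relatively free nilpotent group of class two of rank two. -/
abbrev FreeNilTwo : Type := FreeGroup (Fin 2) ⧸ (⊤ : Subgroup (FreeGroup (Fin 2))).lowerCentralSeries 2

/-!
In a 2-Engel group `[a, b]` commutes with `b`, hence `[a, bᵏ] = [a, b]ᵏ`, and symmetrically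
`[aᵏ, b] = [a, b]ᵏ`. Thus `[a, b]ⁿ = [a, bⁿ]` and `[a, d]ⁿ = [aⁿ, d]`, so `[a, b]ⁿ` depends
only on `aⁿ` and `bⁿ`: homomorphisms into a 2-Engel group that agree on `xⁿ` and `yⁿ` agree on
`[x, y]ⁿ`.

For `[x, y]ⁿ ∉ ⟨xⁿ, yⁿ⟩`, send `x ↦ (1, 0, 0)` and `y ↦ (0, 1, 0)` in the integral Heisenberg
group. The triples `(a, b, c)` with `n ∣ a`, `n ∣ b`, `n² ∣ c` form a subgroup containing the
images of `xⁿ` and `yⁿ`, but not the image `(0, 0, n)` of `[x, y]ⁿ` when `n > 1`.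
-/

section CommElem

variable {K : Type*} [Group K]

theorem commElem_eq_one_iff {a b : K} : commElem a b = 1 ↔ Commute a b := by
  rw [commElem, mul_assoc, mul_assoc, inv_mul_eq_one, eq_inv_mul_iff_mul_eq, eq_comm]
  rfl

theorem commElem_inv (a b : K) : (commElem a b)⁻¹ = commElem b a := by
  simp [commElem, mul_assoc]

theorem map_commElem {G : Type*} [Group G] (f : G →* K) (a b : G) :
    f (commElem a b) = commElem (f a) (f b) := by
  simp [commElem]

namespace Engel2

theorem commute_commElem_right (hK : Engel2 K) (a b : K) : Commute (commElem a b) b :=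
  commElem_eq_one_iff.mp (hK a b)

theorem commElem_pow_right (hK : Engel2 K) (a b : K) (k : ℕ) :
    commElem a (b ^ k) = commElem a b ^ k := by
  induction k with
  | zero => simp [commElem]
  | succ k ih =>
    have hc : Commute (commElem a b) (b ^ k) := (hK.commute_commElem_right a b).pow_right k
    calc commElem a (b ^ (k + 1))
        = commElem a (b ^ k) * ((b ^ k)⁻¹ * commElem a b * b ^ k) := by
          simp only [commElem, pow_succ']; group
      _ = commElem a b ^ (k + 1) := by
          rw [mul_assoc, hc.eq, inv_mul_cancel_left, ih, pow_succ]

theorem commElem_pow_left (hK : Engel2 K) (a b : K) (k : ℕ) :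
    commElem (a ^ k) b = commElem a b ^ k := by
  rw [← commElem_inv, hK.commElem_pow_right, ← inv_pow, commElem_inv]

theorem commElem_pow_eq_of_pow_eq (hK : Engel2 K) {a b c d : K} {n : ℕ} (ha : a ^ n = c ^ n)
    (hb : b ^ n = d ^ n) : commElem a b ^ n = commElem c d ^ n := by
  rw [← hK.commElem_pow_right, hb, hK.commElem_pow_right, ← hK.commElem_pow_left, ha,
    hK.commElem_pow_left]

end Engel2

end CommElem

theorem commElem_pow_mem_dominion_engel2 {G : Type v} [Group G] (a b : G) (n : ℕ) :
    commElem a b ^ n ∈ dominion.{u} Engel2 (Subgroup.closure {a ^ n, b ^ n}) := by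
  intro K _ hK f g hfg
  have ha : f a ^ n = g a ^ n := by simpa using hfg (a ^ n) (Subgroup.subset_closure (by simp))
  have hb : f b ^ n = g b ^ n := by simpa using hfg (b ^ n) (Subgroup.subset_closure (by simp))
  simpa only [map_pow, map_commElem] using hK.commElem_pow_eq_of_pow_eq ha hb

/-- `⟨a, b, c⟩` stands for the unitriangular matrix `[[1, a, c], [0, 1, b], [0, 0, 1]]`. -/
@[ext]
structure Heis (R : Type*) where
  a : R
  b : R
  c : R

namespace Heis

variable {R : Type*} [CommRing R]

instance : Mul (Heis R) := ⟨fun p q => ⟨p.a + q.a, p.b + q.b, p.c + q.c + p.a * q.b⟩⟩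
instance : One (Heis R) := ⟨⟨0, 0, 0⟩⟩
instance : Inv (Heis R) := ⟨fun p => ⟨-p.a, -p.b, -p.c + p.a * p.b⟩⟩

@[simp] theorem mul_a (p q : Heis R) : (p * q).a = p.a + q.a := rfl
@[simp] theorem mul_b (p q : Heis R) : (p * q).b = p.b + q.b := rfl
@[simp] theorem mul_c (p q : Heis R) : (p * q).c = p.c + q.c + p.a * q.b := rfl
@[simp] theorem one_a : (1 : Heis R).a = 0 := rfl
@[simp] theorem one_b : (1 : Heis R).b = 0 := rfl
@[simp] theorem one_c : (1 : Heis R).c = 0 := rfl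
@[simp] theorem inv_a (p : Heis R) : p⁻¹.a = -p.a := rfl
@[simp] theorem inv_b (p : Heis R) : p⁻¹.b = -p.b := rfl
@[simp] theorem inv_c (p : Heis R) : p⁻¹.c = -p.c + p.a * p.b := rfl

instance : Group (Heis R) where
  mul_assoc p q r := by ext <;> simp <;> ring
  one_mul p := by ext <;> simp
  mul_one p := by ext <;> simp
  inv_mul_cancel p := by ext <;> simp

theorem pow_eq (p : Heis R) (k : ℕ) :
    p ^ k = ⟨k * p.a, k * p.b, k * p.c + k.choose 2 * (p.a * p.b)⟩ := by
  induction k with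
  | zero => ext <;> simp
  | succ k ih =>
    rw [pow_succ, ih, Nat.choose_succ_succ', Nat.choose_one_right]
    ext <;> simp <;> ring

theorem mem_center {p : Heis R} (ha : p.a = 0) (hb : p.b = 0) : p ∈ Subgroup.center (Heis R) :=
  Subgroup.mem_center_iff.mpr fun q => by ext <;> simp [ha, hb, add_comm]

theorem lowerCentralSeries_two_eq_bot : (⊤ : Subgroup (Heis R)).lowerCentralSeries 2 = ⊥ := by
  refine Subgroup.lowerCentralSeries_succ_eq_bot _ ?_
  rw [Subgroup.top_lowerCentralSeries_one, commutator_def, Subgroup.commutator_le]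
  intro p _ q _
  exact mem_center (by simp [commutatorElement_def]) (by simp [commutatorElement_def])

theorem commElem_mk : commElem (⟨1, 0, 0⟩ : Heis R) ⟨0, 1, 0⟩ = ⟨0, 0, 1⟩ := by
  ext <;> simp [commElem]

def dvdSubgroup (m : R) : Subgroup (Heis R) where
  carrier := {p | m ∣ p.a ∧ m ∣ p.b ∧ m ^ 2 ∣ p.c}
  one_mem' := by simp
  mul_mem' := by
    rintro p q ⟨hpa, hpb, hpc⟩ ⟨hqa, hqb, hqc⟩
    exact ⟨dvd_add hpa hqa, dvd_add hpb hqb,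
      dvd_add (dvd_add hpc hqc) (sq m ▸ mul_dvd_mul hpa hqb)⟩
  inv_mem' := by
    rintro p ⟨hpa, hpb, hpc⟩
    exact ⟨hpa.neg_right, hpb.neg_right, dvd_add hpc.neg_right (sq m ▸ mul_dvd_mul hpa hpb)⟩

end Heis

theorem MonoidHom.lowerCentralSeries_le_ker {G K : Type*} [Group G] [Group K] {n : ℕ}
    (hK : (⊤ : Subgroup K).lowerCentralSeries n = ⊥) (f : G →* K) :
    (⊤ : Subgroup G).lowerCentralSeries n ≤ f.ker := by
  intro w hw
  have h : f w ∈ (⊤ : Subgroup K).lowerCentralSeries n :=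
    Subgroup.lowerCentralSeries_mono n le_top
      (Subgroup.map_lowerCentralSeries ⊤ f n ▸ Subgroup.mem_map_of_mem f hw)
  rwa [hK, Subgroup.mem_bot] at h

namespace FreeNilTwo

variable {K : Type*} [Group K] (hK : (⊤ : Subgroup K).lowerCentralSeries 2 = ⊥) (e : Fin 2 → K)

def lift : FreeNilTwo →* K :=
  QuotientGroup.lift _ (FreeGroup.lift e) ((FreeGroup.lift e).lowerCentralSeries_le_ker hK)

theorem lift_mk_of (i : Fin 2) : lift hK e (QuotientGroup.mk (FreeGroup.of i)) = e i := by
  rw [lift, QuotientGroup.lift_mk, FreeGroup.lift_apply_of]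

end FreeNilTwo

/-- In the relatively free nilpotent group of class two of rank two, freely
generated by `x` and `y`, for any integer `n > 1` the element `[x,y]ⁿ` lies in
the dominion of `H = ⟨xⁿ, yⁿ⟩` in the class of 2-Engel groups, but `[x,y]ⁿ ∉ H`;
in particular the class of 2-Engel groups has nontrivial dominions. -/
theorem dominion_nontrivial_engel (n : ℕ) (hn : 1 < n) :
    let x : FreeNilTwo := QuotientGroup.mk (FreeGroup.of 0)
    let y : FreeNilTwo := QuotientGroup.mk (FreeGroup.of 1)
    let H : Subgroup FreeNilTwo := Subgroup.closure {x ^ n, y ^ n}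
    (commElem x y) ^ n ∈ dominion Engel2 H ∧ (commElem x y) ^ n ∉ H := by
  intro x y H
  refine ⟨commElem_pow_mem_dominion_engel2 x y n, fun hmem => ?_⟩
  let φ := FreeNilTwo.lift Heis.lowerCentralSeries_two_eq_bot ![(⟨1, 0, 0⟩ : Heis ℤ), ⟨0, 1, 0⟩]
  have hx : φ x = ⟨1, 0, 0⟩ := FreeNilTwo.lift_mk_of _ _ 0
  have hy : φ y = ⟨0, 1, 0⟩ := FreeNilTwo.lift_mk_of _ _ 1
  have hH : H.map φ ≤ Heis.dvdSubgroup (n : ℤ) := by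
    rw [MonoidHom.map_closure, Subgroup.closure_le]
    rintro _ ⟨_, rfl | rfl, rfl⟩ <;> simp [hx, hy, Heis.pow_eq, Heis.dvdSubgroup]
  have hc : φ (commElem x y ^ n) = ⟨0, 0, n⟩ := by
    simp [map_commElem, hx, hy, Heis.commElem_mk, Heis.pow_eq]
  obtain ⟨-, -, hdvd⟩ := hc ▸ hH (Subgroup.mem_map_of_mem φ hmem)
  have hdvd' : n ^ 2 ∣ n ^ 1 := by simpa [← Int.natCast_dvd_natCast] using hdvd
  exact absurd ((Nat.pow_dvd_pow_iff_le_right hn).mp hdvd') (by norm_num)
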